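/- arXiv:2003.03607 — 4 statements merged into one kernel-verified Lean document; each statement's English description precedes it below -/
import Mathlib

section
/- For every σ > 0, t ∈ (0, T] and α ∈ (0,1), one has ∫₀ᵗ t^{1-α} (t-s)^{α-1} e^{-σ(t-s)} s^{α-1} ds ≤ C (T/σ)^{α/2}, where C depends only on α (it can be taken as sup_{x≥0} x^{α/2}e^{-x} times the Beta function B(α/2, α)). -/
/-!
The exponential is traded for a power: `e^{-x} ≤ x^{-q}` for `0 ≤ q ≤ 1`, so with `q = α/2` the
factor `e^{-σ(t-s)}` costs `σ^{-α/2} (t-s)^{-α/2}`. What remains is a Beta integral, and the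
substitution `s = t x` gives `∫₀ᵗ (t-s)^{a-1} s^{b-1} ds = t^{a+b-1} B(b, a)`. The powers of `t`
then combine to `(t/σ)^{α/2}`, so one can take `C = B(α, α/2)`.
-/

open MeasureTheory Set ProbabilityTheory

lemma lintegral_Ioo_rpow_mul_one_sub_rpow {a b : ℝ} (ha : 0 < a) (hb : 0 < b) :
    ∫⁻ x in Ioo 0 1, ENNReal.ofReal (x ^ (a - 1) * (1 - x) ^ (b - 1))
      = ENNReal.ofReal (beta a b) := by
  have hB := beta_pos ha hb
  have h := lintegral_betaPDF_eq_one ha hb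
  simp_rw [lintegral_betaPDF, mul_assoc, ENNReal.ofReal_mul (one_div_pos.2 hB).le] at h
  rw [lintegral_const_mul' _ _ ENNReal.ofReal_ne_top, ENNReal.ofReal_div_of_pos hB,
    ENNReal.ofReal_one, one_div, mul_comm] at h
  rw [ENNReal.eq_inv_of_mul_eq_one_left h, inv_inv]

lemma lintegral_Ioo_sub_rpow_mul_rpow {a b t : ℝ} (ha : 0 < a) (hb : 0 < b) (ht : 0 < t) :
    ∫⁻ s in Ioo 0 t, ENNReal.ofReal ((t - s) ^ (a - 1) * s ^ (b - 1))
      = ENNReal.ofReal (t ^ (a + b - 1) * beta b a) := by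
  have himage : (fun x => t * x) '' Ioo 0 1 = Ioo 0 t := by simp [image_mul_left_Ioo ht]
  rw [← himage, lintegral_image_eq_lintegral_abs_deriv_mul (f := fun x => t * x) measurableSet_Ioo
      (fun x _ => ((hasDerivAt_id' x).const_mul t).hasDerivWithinAt)
      (mul_right_injective₀ ht.ne').injOn,
    ENNReal.ofReal_mul (by positivity), ← lintegral_Ioo_rpow_mul_one_sub_rpow hb ha,
    ← lintegral_const_mul' _ _ ENNReal.ofReal_ne_top]
  refine setLIntegral_congr_fun measurableSet_Ioo fun x hx => ?_
  rw [← ENNReal.ofReal_mul (abs_nonneg _), ← ENNReal.ofReal_mul (by positivity)]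
  congr 1
  have h1x : 0 < 1 - x := sub_pos.2 hx.2
  rw [mul_one, abs_of_pos ht, ← mul_one_sub, Real.mul_rpow ht.le h1x.le,
    Real.mul_rpow ht.le hx.1.le, show a + b - 1 = 1 + (a - 1) + (b - 1) by ring,
    Real.rpow_add ht, Real.rpow_add ht, Real.rpow_one]
  ring

lemma rpow_le_exp {x q : ℝ} (hx : 0 ≤ x) (hq : 0 ≤ q) (hq1 : q ≤ 1) : x ^ q ≤ Real.exp x := by
  rcases le_total x 1 with h | h
  · calc x ^ q ≤ 1 := Real.rpow_le_one hx h hq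
      _ ≤ Real.exp x := Real.one_le_exp hx
  · calc x ^ q ≤ x := Real.rpow_le_self_of_one_le h hq1
      _ ≤ Real.exp x := (Real.add_one_le_exp x).trans' (by linarith)

lemma exp_neg_le_rpow_neg {x q : ℝ} (hx : 0 < x) (hq : 0 ≤ q) (hq1 : q ≤ 1) :
    Real.exp (-x) ≤ x ^ (-q) := by
  rw [Real.exp_neg, Real.rpow_neg hx.le]
  exact inv_anti₀ (by positivity) (rpow_le_exp hx.le hq hq1)

lemma lintegral_Ioo_sub_rpow_mul_exp_mul_rpow_le {a b q σ t : ℝ} (hq : 0 ≤ q) (hq1 : q ≤ 1)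
    (hqa : q < a) (hb : 0 < b) (hσ : 0 < σ) (ht : 0 < t) :
    ∫⁻ s in Ioo 0 t, ENNReal.ofReal ((t - s) ^ (a - 1) * Real.exp (-σ * (t - s)) * s ^ (b - 1))
      ≤ ENNReal.ofReal (σ ^ (-q) * (t ^ (a - q + b - 1) * beta b (a - q))) := by
  have hpointwise : ∀ s ∈ Ioo 0 t,
      (t - s) ^ (a - 1) * Real.exp (-σ * (t - s)) * s ^ (b - 1)
        ≤ σ ^ (-q) * ((t - s) ^ (a - q - 1) * s ^ (b - 1)) := by
    intro s hs
    have hts : 0 < t - s := sub_pos.2 hs.2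
    have hexp : Real.exp (-σ * (t - s)) ≤ σ ^ (-q) * (t - s) ^ (-q) := by
      rw [neg_mul, ← Real.mul_rpow hσ.le hts.le]
      exact exp_neg_le_rpow_neg (by positivity) hq hq1
    calc (t - s) ^ (a - 1) * Real.exp (-σ * (t - s)) * s ^ (b - 1)
        ≤ (t - s) ^ (a - 1) * (σ ^ (-q) * (t - s) ^ (-q)) * s ^ (b - 1) :=
          mul_le_mul_of_nonneg_right (by gcongr) (Real.rpow_nonneg hs.1.le _)
      _ = σ ^ (-q) * ((t - s) ^ (a - q - 1) * s ^ (b - 1)) := by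
        rw [show a - q - 1 = a - 1 + -q by ring, Real.rpow_add hts]
        ring
  calc _ ≤ ∫⁻ s in Ioo 0 t, ENNReal.ofReal (σ ^ (-q) * ((t - s) ^ (a - q - 1) * s ^ (b - 1))) :=
        setLIntegral_mono' measurableSet_Ioo fun s hs => ENNReal.ofReal_le_ofReal (hpointwise s hs)
    _ = _ := by
      simp_rw [ENNReal.ofReal_mul (by positivity : 0 ≤ σ ^ (-q))]
      rw [lintegral_const_mul' _ _ ENNReal.ofReal_ne_top,
        lintegral_Ioo_sub_rpow_mul_rpow (by linarith) hb ht]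

theorem stmt_0 (α : ℝ) (hα : α ∈ Set.Ioo (0:ℝ) 1) :
    ∃ C > (0:ℝ), ∀ σ > (0:ℝ), ∀ T > (0:ℝ), ∀ t ∈ Set.Ioc (0:ℝ) T,
      ∫⁻ s in Set.Ioo (0:ℝ) t,
        ENNReal.ofReal (t ^ (1 - α) * (t - s) ^ (α - 1) * Real.exp (-σ * (t - s)) * s ^ (α - 1))
      ≤ ENNReal.ofReal (C * (T / σ) ^ (α / 2)) := by
  obtain ⟨hα0, hα1⟩ := hα
  have hC := beta_pos hα0 (half_pos hα0)
  refine ⟨beta α (α / 2), hC, fun σ hσ T hT t ⟨ht0, htT⟩ => ?_⟩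
  have hkernel := lintegral_Ioo_sub_rpow_mul_exp_mul_rpow_le (a := α) (b := α) (q := α / 2)
    (by positivity) (by linarith) (by linarith) hα0 hσ ht0
  have hpower : t ^ (1 - α) * (σ ^ (-(α / 2)) * (t ^ (α - α / 2 + α - 1) * beta α (α - α / 2)))
      = beta α (α / 2) * (t / σ) ^ (α / 2) := by
    have ht : t ^ (1 - α) * t ^ (α / 2 + α - 1) = t ^ (α / 2) := by
      rw [← Real.rpow_add ht0]
      ring_nf
    rw [Real.div_rpow ht0.le hσ.le, Real.rpow_neg hσ.le, show α - α / 2 = α / 2 by ring, ← ht]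
    ring
  simp_rw [mul_assoc, ENNReal.ofReal_mul (by positivity : 0 ≤ t ^ (1 - α))]
  rw [lintegral_const_mul' _ _ ENNReal.ofReal_ne_top]
  calc _ ≤ ENNReal.ofReal (t ^ (1 - α)) *
        ENNReal.ofReal (σ ^ (-(α / 2)) * (t ^ (α - α / 2 + α - 1) * beta α (α - α / 2))) := by
        gcongr
        simpa only [mul_assoc] using hkernel
    _ ≤ _ := by
      rw [← ENNReal.ofReal_mul (by positivity), hpower]
      gcongr
end

section
/- If w : (0,T] → ℝ is continuously differentiable with ‖w'(t)‖ ≤ C t^{2α−2} for all t ∈ (0,T] where α ∈ (0,1/2] and C > 0, then for any ε ∈ (0, 2α) the Sobolev–Slobodeckij seminorm ∫₀ᵀ∫₀ᵀ |w(t) − w(s)|/|t−s|^{2α+1−ε} dt ds is finite. -/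
/-!
By the mean value theorem `|w t - w s| ≤ C m^(2α-2) |t - s|` with `m = min s t`, while
`|w t - w s| ≤ 2M` for a bound `M` of `|w|` on `[0, T]`. Interpolating, `min x y ≤ x^(1-θ) y^θ`,
with `θ = 2α - ε/2` bounds the integrand by a multiple of `m^(-(2-2α)θ) |t - s|^(ε/2 - 1)`.
Both exponents exceed `-1`, since `(2 - 2α)θ < 4α(1 - α) ≤ 1`, and such a kernel is integrable
on the square: `m^p ≤ s^p + t^p`, the `t`-integral of `|t - s|^q` is bounded uniformly in `s`
by translation invariance, and the two halves agree by Tonelli.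
-/

open MeasureTheory Set

theorem Real.min_le_rpow_mul_rpow {x y θ : ℝ} (hx : 0 ≤ x) (hy : 0 ≤ y) (hθ₀ : 0 ≤ θ)
    (hθ₁ : θ ≤ 1) : min x y ≤ x ^ (1 - θ) * y ^ θ := by
  have hm : 0 ≤ min x y := le_min hx hy
  calc min x y = min x y ^ (1 - θ) * min x y ^ θ := by
        rw [← Real.rpow_add' hm (by norm_num), sub_add_cancel, Real.rpow_one]
    _ ≤ x ^ (1 - θ) * y ^ θ := by
        have : 0 ≤ 1 - θ := by linarith
        gcongr
        exacts [min_le_left x y, min_le_right x y]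

theorem div_rpow_le_of_le_of_le_mul {x A B r q θ : ℝ} (hx : 0 ≤ x) (hB : 0 ≤ B) (hr : 0 < r)
    (hθ₀ : 0 ≤ θ) (hθ₁ : θ ≤ 1) (hxA : x ≤ A) (hxB : x ≤ B * r) :
    x / r ^ q ≤ A ^ (1 - θ) * B ^ θ * r ^ (θ - q) := by
  have hx_le : x ≤ A ^ (1 - θ) * (B * r) ^ θ :=
    (le_min hxA hxB).trans <|
      Real.min_le_rpow_mul_rpow (hx.trans hxA) (mul_nonneg hB hr.le) hθ₀ hθ₁
  calc x / r ^ q ≤ A ^ (1 - θ) * (B * r) ^ θ / r ^ q := by gcongr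
    _ = A ^ (1 - θ) * B ^ θ * r ^ (θ - q) := by
        rw [Real.mul_rpow hB hr.le, Real.rpow_sub hr]
        ring

theorem abs_sub_le_of_abs_deriv_le_rpow {w : ℝ → ℝ} {C γ T s t : ℝ} (hC : 0 ≤ C) (hγ : γ ≤ 0)
    (hw_diff : ∀ u ∈ Ioc 0 T, DifferentiableAt ℝ w u)
    (hw'_bd : ∀ u ∈ Ioc 0 T, |deriv w u| ≤ C * u ^ γ) (hs : s ∈ Ioc 0 T) (ht : t ∈ Ioc 0 T) :
    |w t - w s| ≤ C * min s t ^ γ * |t - s| := by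
  have hm : 0 < min s t := lt_min hs.1 ht.1
  have hsub : Icc (min s t) T ⊆ Ioc 0 T := fun u hu => ⟨hm.trans_le hu.1, hu.2⟩
  refine Convex.norm_image_sub_le_of_norm_deriv_le (fun u hu => hw_diff u (hsub hu))
    (fun u hu => ?_) (convex_Icc _ _) ⟨min_le_left s t, hs.2⟩ ⟨min_le_right s t, ht.2⟩
  calc ‖deriv w u‖ ≤ C * u ^ γ := hw'_bd u (hsub hu)
    _ ≤ C * min s t ^ γ := by gcongr C * ?_; exact Real.rpow_le_rpow_of_nonpos hm hu.1 hγ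

theorem abs_sub_div_rpow_le_of_abs_deriv_le_rpow {w : ℝ → ℝ} {C M γ θ q T s t : ℝ} (hC : 0 ≤ C)
    (hγ : γ ≤ 0) (hθ₀ : 0 ≤ θ) (hθ₁ : θ ≤ 1)
    (hw_diff : ∀ u ∈ Ioc 0 T, DifferentiableAt ℝ w u)
    (hw'_bd : ∀ u ∈ Ioc 0 T, |deriv w u| ≤ C * u ^ γ) (hs : s ∈ Ioc 0 T) (ht : t ∈ Ioc 0 T)
    (hws : |w s| ≤ M) (hwt : |w t| ≤ M) :
    |w t - w s| / |t - s| ^ q ≤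
      (2 * M) ^ (1 - θ) * C ^ θ * (min s t ^ (γ * θ) * |t - s| ^ (θ - q)) := by
  have hm : 0 ≤ min s t := le_min hs.1.le ht.1.le
  obtain rfl | hst := eq_or_ne t s
  · have hM : 0 ≤ M := (abs_nonneg _).trans hws
    simp only [sub_self, abs_zero, zero_div]
    positivity
  calc |w t - w s| / |t - s| ^ q
      ≤ (2 * M) ^ (1 - θ) * (C * min s t ^ γ) ^ θ * |t - s| ^ (θ - q) :=
        div_rpow_le_of_le_of_le_mul (abs_nonneg _) (by positivity)
          (abs_pos.mpr (sub_ne_zero.mpr hst)) hθ₀ hθ₁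
          ((abs_sub _ _).trans (by linarith))
          (abs_sub_le_of_abs_deriv_le_rpow hC hγ hw_diff hw'_bd hs ht)
    _ = (2 * M) ^ (1 - θ) * C ^ θ * (min s t ^ (γ * θ) * |t - s| ^ (θ - q)) := by
        rw [Real.mul_rpow hC (by positivity), ← Real.rpow_mul hm]
        ring

theorem setLIntegral_abs_sub_rpow_le {q T s : ℝ} (hs : s ∈ Ioo 0 T) :
    ∫⁻ t in Ioo 0 T, ENNReal.ofReal (|t - s| ^ q) ≤
      ∫⁻ u in Icc (-T) T, ENNReal.ofReal (|u| ^ q) := by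
  have hsub : Ioo 0 T ⊆ (· - s) ⁻¹' Icc (-T) T := fun t ht =>
    ⟨by linarith [hs.2, ht.1], by linarith [hs.1, ht.2]⟩
  calc ∫⁻ t in Ioo 0 T, ENNReal.ofReal (|t - s| ^ q)
      ≤ ∫⁻ t in (· - s) ⁻¹' Icc (-T) T, ENNReal.ofReal (|t - s| ^ q) := lintegral_mono_set hsub
    _ = ∫⁻ u in Icc (-T) T, ENNReal.ofReal (|u| ^ q) :=
        (measurePreserving_sub_right volume s).setLIntegral_comp_preimage measurableSet_Icc
          ((measurable_abs.pow_const q).ennreal_ofReal)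

theorem locallyIntegrable_abs_rpow {q : ℝ} (hq : -1 < q) :
    LocallyIntegrable (fun u : ℝ => |u| ^ q) :=
  locallyIntegrable_of_norm_le_rpow (C := 1) (α := -q) (by simp) (by simp; linarith)
    (Filter.Eventually.of_forall fun u => by
      rw [neg_neg, one_mul, Real.norm_eq_abs, abs_of_nonneg (by positivity), Real.norm_eq_abs])
    (measurable_abs.pow_const q).aestronglyMeasurable

theorem lintegral_rpow_mul_abs_sub_rpow_lt_top {p q T : ℝ} (hp : -1 < p) (hq : -1 < q) :
    ∫⁻ s in Ioo 0 T, ∫⁻ t in Ioo 0 T, ENNReal.ofReal (s ^ p * |t - s| ^ q) < ⊤ := by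
  set J := ∫⁻ u in Icc (-T) T, ENNReal.ofReal (|u| ^ q)
  have hJ : J < ⊤ :=
    ((locallyIntegrable_abs_rpow hq).integrableOn_isCompact isCompact_Icc).setLIntegral_lt_top
  have hI : ∫⁻ s in Ioo 0 T, ENNReal.ofReal (s ^ p) < ⊤ :=
    ((intervalIntegral.intervalIntegrable_rpow' hp).def'.mono_set
      (Ioo_subset_Ioc_self.trans Ioc_subset_uIoc)).setLIntegral_lt_top
  calc ∫⁻ s in Ioo 0 T, ∫⁻ t in Ioo 0 T, ENNReal.ofReal (s ^ p * |t - s| ^ q)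
      ≤ ∫⁻ s in Ioo 0 T, ENNReal.ofReal (s ^ p) * J := by
        refine setLIntegral_mono' measurableSet_Ioo fun s hs => ?_
        simp only [ENNReal.ofReal_mul (Real.rpow_nonneg hs.1.le p)]
        rw [lintegral_const_mul' _ _ ENNReal.ofReal_ne_top]
        gcongr
        exact setLIntegral_abs_sub_rpow_le hs
    _ < ⊤ := by
        rw [lintegral_mul_const' _ _ hJ.ne]
        exact ENNReal.mul_lt_top hI hJ

theorem lintegral_min_rpow_mul_abs_sub_rpow_lt_top {p q T : ℝ} (hp : -1 < p) (hq : -1 < q) :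
    ∫⁻ s in Ioo 0 T, ∫⁻ t in Ioo 0 T, ENNReal.ofReal (min s t ^ p * |t - s| ^ q) < ⊤ := by
  set f : ℝ → ℝ → ENNReal := fun s t => ENNReal.ofReal (s ^ p * |t - s| ^ q)
  have hf : Measurable (Function.uncurry f) := by fun_prop
  have hmin : ∀ s ∈ Ioo 0 T, ∀ t ∈ Ioo 0 T,
      ENNReal.ofReal (min s t ^ p * |t - s| ^ q) ≤ f s t + f t s := by
    intro s hs t ht
    have hst : |s - t| = |t - s| := abs_sub_comm s t
    rcases min_choice s t with h | h <;> simp only [f, h, hst]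
    exacts [le_self_add, le_add_self]
  have hfs : ∀ s, Measurable (f s) := fun s => hf.comp measurable_prodMk_left
  have hF : Measurable fun s => ∫⁻ t in Ioo 0 T, f s t := hf.lintegral_prod_right'
  have hswap : ∫⁻ s in Ioo 0 T, ∫⁻ t in Ioo 0 T, f t s = ∫⁻ s in Ioo 0 T, ∫⁻ t in Ioo 0 T, f s t :=
    lintegral_lintegral_swap (hf.comp measurable_swap).aemeasurable
  calc ∫⁻ s in Ioo 0 T, ∫⁻ t in Ioo 0 T, ENNReal.ofReal (min s t ^ p * |t - s| ^ q)
      ≤ ∫⁻ s in Ioo 0 T, ∫⁻ t in Ioo 0 T, (f s t + f t s) :=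
        setLIntegral_mono' measurableSet_Ioo fun s hs =>
          setLIntegral_mono' measurableSet_Ioo fun t ht => hmin s hs t ht
    _ = 2 * ∫⁻ s in Ioo 0 T, ∫⁻ t in Ioo 0 T, f s t := by
        rw [lintegral_congr fun s => lintegral_add_left (hfs s) _,
          lintegral_add_left hF, hswap, two_mul]
    _ < ⊤ := ENNReal.mul_lt_top ENNReal.ofNat_lt_top
        (lintegral_rpow_mul_abs_sub_rpow_lt_top hp hq)

theorem stmt_6_general (α ε T C : ℝ) (hα : α ∈ Set.Ioc (0:ℝ) (1/2)) (hC : 0 < C)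
    (hε : ε ∈ Set.Ioo (0:ℝ) (2 * α)) (w : ℝ → ℝ)
    (hw_cont : ContinuousOn w (Set.Icc 0 T))
    (hw_diff : ∀ t ∈ Set.Ioc (0:ℝ) T, DifferentiableAt ℝ w t)
    (hw'_bd : ∀ t ∈ Set.Ioc (0:ℝ) T, |deriv w t| ≤ C * t ^ (2 * α - 2)) :
    ∫⁻ s in Set.Ioo (0:ℝ) T, ∫⁻ t in Set.Ioo (0:ℝ) T,
        ENNReal.ofReal (|w t - w s| / |t - s| ^ (2 * α + 1 - ε)) < ⊤ := by
  obtain ⟨M, hM⟩ := isCompact_Icc.exists_bound_of_continuousOn hw_cont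
  obtain ⟨-, hα₁⟩ := hα
  obtain ⟨hε₀, hε₁⟩ := hε
  set θ := 2 * α - ε / 2 with hθ
  set K := (2 * M) ^ (1 - θ) * C ^ θ
  have hθ₀ : 0 ≤ θ := by linarith
  have hθ₁ : θ ≤ 1 := by linarith
  have hp : -1 < (2 * α - 2) * θ := by nlinarith [sq_nonneg (2 * α - 1)]
  have hq : -1 < θ - (2 * α + 1 - ε) := by linarith
  have hbound : ∀ s ∈ Ioo 0 T, ∀ t ∈ Ioo 0 T,
      ENNReal.ofReal (|w t - w s| / |t - s| ^ (2 * α + 1 - ε)) ≤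
        ENNReal.ofReal K *
          ENNReal.ofReal (min s t ^ ((2 * α - 2) * θ) * |t - s| ^ (θ - (2 * α + 1 - ε))) := by
    intro s hs t ht
    rw [← ENNReal.ofReal_mul' (mul_nonneg (Real.rpow_nonneg (le_min hs.1.le ht.1.le) _)
      (Real.rpow_nonneg (abs_nonneg _) _))]
    exact ENNReal.ofReal_le_ofReal <| abs_sub_div_rpow_le_of_abs_deriv_le_rpow hC.le
      (by linarith) hθ₀ hθ₁ hw_diff hw'_bd
      (Ioo_subset_Ioc_self hs) (Ioo_subset_Ioc_self ht)
      (hM s (Ioo_subset_Icc_self hs)) (hM t (Ioo_subset_Icc_self ht))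
  calc _ ≤ ∫⁻ s in Ioo 0 T, ∫⁻ t in Ioo 0 T, ENNReal.ofReal K *
          ENNReal.ofReal (min s t ^ ((2 * α - 2) * θ) * |t - s| ^ (θ - (2 * α + 1 - ε))) :=
        setLIntegral_mono' measurableSet_Ioo fun s hs =>
          setLIntegral_mono' measurableSet_Ioo fun t ht => hbound s hs t ht
    _ < ⊤ := by
        simp only [lintegral_const_mul' _ _ ENNReal.ofReal_ne_top]
        exact ENNReal.mul_lt_top ENNReal.ofReal_lt_top
          (lintegral_min_rpow_mul_abs_sub_rpow_lt_top hp hq)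

theorem stmt_6 (α ε T C : ℝ) (hα : α ∈ Set.Ioc (0:ℝ) (1/2)) (hT : 0 < T) (hC : 0 < C)
    (hε : ε ∈ Set.Ioo (0:ℝ) (2 * α)) (w : ℝ → ℝ)
    (hw_cont : ContinuousOn w (Set.Icc 0 T))
    (hw_diff : ∀ t ∈ Set.Ioc (0:ℝ) T, DifferentiableAt ℝ w t)
    (hw'_cont : ContinuousOn (deriv w) (Set.Ioc 0 T))
    (hw'_bd : ∀ t ∈ Set.Ioc (0:ℝ) T, |deriv w t| ≤ C * t ^ (2 * α - 2)) :
    ∫⁻ s in Set.Ioo (0:ℝ) T, ∫⁻ t in Set.Ioo (0:ℝ) T,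
        ENNReal.ofReal (|w t - w s| / |t - s| ^ (2 * α + 1 - ε)) < ⊤ :=
  stmt_6_general α ε T C hα hC hε w hw_cont hw_diff hw'_bd
end

section
/- Discrete Grönwall inequality with weakly singular kernel: let α ∈ (0,1), τ > 0, t_n = nτ, and suppose nonnegative numbers (a_n)_{n=1}^{N} satisfy a_n ≤ A + B τ Σ_{j=1}^{n} t_{n−j+1}^{α−1} a_j for all 1 ≤ n ≤ N, with A, B ≥ 0 and Bτ^α < 1/2. Then there is a constant C depending only on α, B, and T = Nτ such that a_n ≤ C A for all 1 ≤ n ≤ N. -/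
open MeasureTheory Set Finset

-- Bernoulli-type: tangent line bound for concave x^α
lemma bern_aux {α : ℝ} (h0 : 0 < α) (h1 : α < 1) {x : ℝ} (hx : 1 ≤ x) :
    α * x ^ (α - 1) ≤ x ^ α - (x - 1) ^ α := by
  have hx0 : (0:ℝ) < x := lt_of_lt_of_le one_pos hx
  have hs : -1 ≤ -(1/x) := by
    have : 1/x ≤ 1 := by
      rw [div_le_one hx0]; exact hx
    linarith
  have hb := rpow_one_add_le_one_add_mul_self hs h0.le h1.le
  have hxm : x - 1 = x * (1 + -(1/x)) := by field_simp; ring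
  have h2 : (x - 1) ^ α = x ^ α * (1 + -(1/x)) ^ α := by
    rw [hxm, Real.mul_rpow hx0.le (by linarith)]
  have h3 : x ^ α * (1 + -(1/x)) ^ α ≤ x ^ α * (1 + α * -(1/x)) := by
    apply mul_le_mul_of_nonneg_left hb (Real.rpow_nonneg hx0.le α)
  have h4 : x ^ α * (1 + α * -(1/x)) = x ^ α - α * x ^ (α - 1) := by
    have : x ^ (α - 1) = x ^ α / x := by
      rw [Real.rpow_sub hx0, Real.rpow_one]
    rw [this]; field_simp; ring
  nlinarith [h2, h3, h4]

lemma sum_pow_aux {α : ℝ} (h0 : 0 < α) (h1 : α < 1) (m : ℕ) :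
    ∑ k ∈ Finset.Icc 2 m, ((k:ℝ)) ^ (α - 1) ≤ (m:ℝ) ^ α / α := by
  induction m with
  | zero => simp [Real.zero_rpow (ne_of_gt h0)]
  | succ m ih =>
    rcases Nat.lt_or_ge (m+1) 2 with h | h
    · have hm0 : m = 0 := by omega
      subst hm0
      rw [show Finset.Icc 2 (0+1) = (∅ : Finset ℕ) by decide]
      rw [Finset.sum_empty]
      positivity
    · have hm1 : (1:ℝ) ≤ (m:ℝ) + 1 := by
        have := Nat.cast_nonneg (α := ℝ) m; linarith
      rw [Finset.sum_Icc_succ_top h]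
      have hb := bern_aux h0 h1 hm1
      have hcast : ((m+1 : ℕ):ℝ) = (m:ℝ) + 1 := by push_cast; ring
      have : ((m:ℝ)+1) ^ (α-1) ≤ (((m:ℝ)+1) ^ α - (m:ℝ) ^ α) / α := by
        rw [le_div_iff₀ h0]
        have he : ((m:ℝ)+1) - 1 = (m:ℝ) := by ring
        rw [he] at hb
        linarith
      rw [hcast]
      calc ∑ k ∈ Finset.Icc 2 m, ((k:ℝ)) ^ (α - 1) + ((m:ℝ)+1) ^ (α-1)
          ≤ (m:ℝ) ^ α / α + (((m:ℝ)+1) ^ α - (m:ℝ) ^ α) / α := by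
            { apply add_le_add ih this }
        _ = ((m:ℝ)+1) ^ α / α := by ring

set_option maxHeartbeats 1000000 in
theorem stmt_7 (α B T : ℝ) (hα : α ∈ Set.Ioo (0:ℝ) 1) (hB : 0 ≤ B) (hT : 0 < T) :
    ∃ C > (0:ℝ), ∀ (N : ℕ), 0 < N → ∀ (τ : ℝ), τ = T / N →
      B * τ ^ α < 1 / 2 →
      ∀ (a : ℕ → ℝ) (A : ℝ), 0 ≤ A → (∀ n, 0 ≤ a n) →
      (∀ n, 1 ≤ n → n ≤ N →
        a n ≤ A + B * (τ * ∑ j ∈ Finset.Icc 1 n, (((n - j + 1 : ℕ) : ℝ) * τ) ^ (α - 1) * a j)) →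
      ∀ n, 1 ≤ n → n ≤ N → a n ≤ C * A := by
  classical
  obtain ⟨h0, h1⟩ := hα
  -- constants
  set δ : ℝ := (α / (4 * (B + 1))) ^ (1/α) with hδdef
  have hδ0 : 0 < δ := Real.rpow_pos_of_pos (by positivity) _
  have hδα : δ ^ α = α / (4 * (B + 1)) := by
    rw [hδdef, ← Real.rpow_mul (by positivity), one_div, inv_mul_cancel₀ (ne_of_gt h0),
      Real.rpow_one]
  set c : ℝ := 2 * B * δ ^ (α - 1) with hcdef
  have hc0 : 0 ≤ c := by
    have := Real.rpow_nonneg hδ0.le (α - 1)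
    positivity
  refine ⟨4 * Real.exp (4 * c * T), by positivity, ?_⟩
  intro N hN τ hτdef hBτ a A hA ha hrec
  have hτ0 : 0 < τ := by
    rw [hτdef]; exact div_pos hT (by exact_mod_cast hN)
  have hNτ : (N : ℝ) * τ = T := by
    rw [hτdef]; field_simp
  set q : ℝ := 1 + 4 * c * τ with hqdef
  have hq1 : 1 ≤ q := by nlinarith [mul_nonneg hc0 hτ0.le]
  have hq0 : 0 ≤ q := by linarith
  -- kernel as τ power identity
  have hττ : τ * τ ^ (α - 1) = τ ^ α := by
    calc τ * τ ^ (α - 1) = τ ^ (1:ℝ) * τ ^ (α - 1) := by rw [Real.rpow_one]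
      _ = τ ^ (1 + (α - 1)) := (Real.rpow_add hτ0 _ _).symm
      _ = τ ^ α := by norm_num
  have key : ∀ n, 1 ≤ n → n ≤ N → a n ≤ 4 * A * q ^ n := by
    intro n
    induction n using Nat.strong_induction_on with
    | _ n ih =>
      intro h1n hnN
      obtain ⟨m, rfl⟩ : ∃ m, n = m + 1 := ⟨n - 1, by omega⟩
      have hrecn := hrec (m + 1) h1n hnN
      rw [Finset.sum_Icc_succ_top (by omega)] at hrecn
      have htop : (((m + 1 - (m + 1) + 1 : ℕ) : ℝ) * τ) ^ (α - 1) * a (m + 1)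
          = τ ^ (α - 1) * a (m + 1) := by
        norm_num
      rw [htop] at hrecn
      set S := ∑ j ∈ Finset.Icc 1 m, (((m + 1 - j + 1 : ℕ) : ℝ) * τ) ^ (α - 1) * a j with hSdef
      have hexp : A + B * (τ * (S + τ ^ (α - 1) * a (m + 1)))
          = A + B * (τ * S) + B * τ ^ α * a (m + 1) := by
        rw [← hττ]; ring
      rw [hexp] at hrecn
      have hhalf : B * τ ^ α * a (m + 1) ≤ (1/2) * a (m + 1) :=
        mul_le_mul_of_nonneg_right hBτ.le (ha _)
      have hstep1 : a (m + 1) ≤ 2 * A + 2 * (B * (τ * S)) := by linarith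
      -- split S into recent and old parts
      set p : ℕ → Prop := fun j => ((m + 1 - j + 1 : ℕ) : ℝ) * τ ≤ δ with hpdef
      have hsplit : S = (∑ j ∈ (Finset.Icc 1 m).filter p,
            (((m + 1 - j + 1 : ℕ) : ℝ) * τ) ^ (α - 1) * a j)
          + ∑ j ∈ (Finset.Icc 1 m).filter (fun j => ¬ p j),
            (((m + 1 - j + 1 : ℕ) : ℝ) * τ) ^ (α - 1) * a j :=
        (Finset.sum_filter_add_sum_filter_not _ _ _).symm
      -- IH bounds for j ≤ m
      have hIH : ∀ j ∈ Finset.Icc 1 m, a j ≤ 4 * A * q ^ j := by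
        intro j hj
        rw [Finset.mem_Icc] at hj
        exact ih j (by omega) hj.1 (by omega)
      -- old part
      have hSold : ∑ j ∈ (Finset.Icc 1 m).filter (fun j => ¬ p j),
            (((m + 1 - j + 1 : ℕ) : ℝ) * τ) ^ (α - 1) * a j
          ≤ δ ^ (α - 1) * (4 * A * ∑ j ∈ Finset.Icc 1 m, q ^ j) := by
        have h1 : ∀ j ∈ (Finset.Icc 1 m).filter (fun j => ¬ p j),
            (((m + 1 - j + 1 : ℕ) : ℝ) * τ) ^ (α - 1) * a j
            ≤ δ ^ (α - 1) * (4 * A * q ^ j) := by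
          intro j hj
          rw [Finset.mem_filter] at hj
          have hker : (((m + 1 - j + 1 : ℕ) : ℝ) * τ) ^ (α - 1) ≤ δ ^ (α - 1) :=
            Real.rpow_le_rpow_of_nonpos hδ0 (le_of_not_ge hj.2) (by linarith)
          have haj := hIH j hj.1
          have hq4 : 0 ≤ 4 * A * q ^ j := by positivity
          exact mul_le_mul hker haj (ha j) (Real.rpow_nonneg hδ0.le _)
        calc ∑ j ∈ (Finset.Icc 1 m).filter (fun j => ¬ p j),
              (((m + 1 - j + 1 : ℕ) : ℝ) * τ) ^ (α - 1) * a j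
            ≤ ∑ j ∈ (Finset.Icc 1 m).filter (fun j => ¬ p j),
              δ ^ (α - 1) * (4 * A * q ^ j) := Finset.sum_le_sum h1
          _ ≤ ∑ j ∈ Finset.Icc 1 m, δ ^ (α - 1) * (4 * A * q ^ j) := by
              apply Finset.sum_le_sum_of_subset_of_nonneg (Finset.filter_subset _ _)
              intro j _ _
              have := Real.rpow_nonneg hδ0.le (α - 1)
              positivity
          _ = δ ^ (α - 1) * (4 * A * ∑ j ∈ Finset.Icc 1 m, q ^ j) := by
              rw [Finset.mul_sum, Finset.mul_sum]
      -- geometric sum bound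
      have hgeom : 4 * c * τ * ∑ j ∈ Finset.Icc 1 m, q ^ j ≤ q ^ (m + 1) - 1 := by
        have hsub : Finset.Icc 1 m ⊆ Finset.range (m + 1) := by
          intro j hj; rw [Finset.mem_Icc] at hj; rw [Finset.mem_range]; omega
        have h2 : ∑ j ∈ Finset.Icc 1 m, q ^ j ≤ ∑ j ∈ Finset.range (m + 1), q ^ j :=
          Finset.sum_le_sum_of_subset_of_nonneg hsub (fun j _ _ => pow_nonneg hq0 j)
        have h3 : (∑ j ∈ Finset.range (m + 1), q ^ j) * (q - 1) = q ^ (m + 1) - 1 :=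
          geom_sum_mul q (m + 1)
        have hq4 : q - 1 = 4 * c * τ := by rw [hqdef]; ring
        have h4 := mul_le_mul_of_nonneg_right h2 (show (0:ℝ) ≤ q - 1 by linarith)
        calc 4 * c * τ * ∑ j ∈ Finset.Icc 1 m, q ^ j
            = (∑ j ∈ Finset.Icc 1 m, q ^ j) * (q - 1) := by rw [hq4]; ring
          _ ≤ (∑ j ∈ Finset.range (m + 1), q ^ j) * (q - 1) := h4
          _ = q ^ (m + 1) - 1 := h3
      -- recent part: kernel sum bound
      have hK : τ * ∑ j ∈ (Finset.Icc 1 m).filter p,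
            (((m + 1 - j + 1 : ℕ) : ℝ) * τ) ^ (α - 1) ≤ δ ^ α / α := by
        set M := Nat.floor (δ / τ) with hMdef
        have hre : ∑ j ∈ (Finset.Icc 1 m).filter p,
              (((m + 1 - j + 1 : ℕ) : ℝ) * τ) ^ (α - 1)
            = ∑ k ∈ (Finset.Icc 2 (m + 1)).filter (fun k : ℕ => (k : ℝ) * τ ≤ δ),
              ((k : ℝ) * τ) ^ (α - 1) := by
          apply Finset.sum_nbij' (i := fun j => m + 2 - j) (j := fun k => m + 2 - k)
          · intro j hj
            rw [Finset.mem_filter, Finset.mem_Icc] at hj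
            rw [Finset.mem_filter, Finset.mem_Icc]
            have hidx : m + 1 - j + 1 = m + 2 - j := by omega
            refine ⟨⟨by omega, by omega⟩, ?_⟩
            have h2j := hj.2
            simp only [hpdef] at h2j
            rw [← hidx]
            exact h2j
          · intro k hk
            rw [Finset.mem_filter, Finset.mem_Icc] at hk
            rw [Finset.mem_filter, Finset.mem_Icc]
            have hidx : m + 1 - (m + 2 - k) + 1 = k := by omega
            refine ⟨⟨by omega, by omega⟩, ?_⟩
            simp only [hpdef, hidx]
            exact hk.2
          · intro j hj
            rw [Finset.mem_filter, Finset.mem_Icc] at hj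
            omega
          · intro k hk
            rw [Finset.mem_filter, Finset.mem_Icc] at hk
            omega
          · intro j hj
            rw [Finset.mem_filter, Finset.mem_Icc] at hj
            have hidx : m + 1 - j + 1 = m + 2 - j := by omega
            rw [hidx]
        rw [hre]
        have hsub2 : (Finset.Icc 2 (m + 1)).filter (fun k : ℕ => (k : ℝ) * τ ≤ δ)
            ⊆ Finset.Icc 2 M := by
          intro k hk
          rw [Finset.mem_filter, Finset.mem_Icc] at hk
          rw [Finset.mem_Icc]
          refine ⟨hk.1.1, Nat.le_floor ?_⟩
          rw [le_div_iff₀ hτ0]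
          exact hk.2
        have h5 : ∑ k ∈ (Finset.Icc 2 (m + 1)).filter (fun k : ℕ => (k : ℝ) * τ ≤ δ),
              ((k : ℝ) * τ) ^ (α - 1) ≤ ∑ k ∈ Finset.Icc 2 M, ((k : ℝ) * τ) ^ (α - 1) :=
          Finset.sum_le_sum_of_subset_of_nonneg hsub2
            (fun k _ _ => Real.rpow_nonneg (by positivity) _)
        have h6 : ∑ k ∈ Finset.Icc 2 M, ((k : ℝ) * τ) ^ (α - 1)
            = (∑ k ∈ Finset.Icc 2 M, (k : ℝ) ^ (α - 1)) * τ ^ (α - 1) := by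
          rw [Finset.sum_mul]
          apply Finset.sum_congr rfl
          intro k _
          rw [Real.mul_rpow (Nat.cast_nonneg k) hτ0.le]
        have h7 := sum_pow_aux h0 h1 M
        have hτpow : (0:ℝ) ≤ τ ^ (α - 1) := Real.rpow_nonneg hτ0.le _
        have h8 : τ * ((∑ k ∈ Finset.Icc 2 M, (k : ℝ) ^ (α - 1)) * τ ^ (α - 1))
            ≤ ((M : ℝ) ^ α / α) * τ ^ α := by
          calc τ * ((∑ k ∈ Finset.Icc 2 M, (k : ℝ) ^ (α - 1)) * τ ^ (α - 1))
              = (∑ k ∈ Finset.Icc 2 M, (k : ℝ) ^ (α - 1)) * (τ * τ ^ (α - 1)) := by ring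
            _ ≤ ((M : ℝ) ^ α / α) * (τ * τ ^ (α - 1)) := by
                apply mul_le_mul_of_nonneg_right h7
                rw [hττ]; exact Real.rpow_nonneg hτ0.le _
            _ = ((M : ℝ) ^ α / α) * τ ^ α := by rw [hττ]
        have h9 : ((M : ℝ) ^ α / α) * τ ^ α ≤ δ ^ α / α := by
          have hMτ : (M : ℝ) * τ ≤ δ := by
            have := Nat.floor_le (by positivity : (0:ℝ) ≤ δ / τ)
            calc (M : ℝ) * τ ≤ (δ / τ) * τ := by
                  apply mul_le_mul_of_nonneg_right this hτ0.le
              _ = δ := by field_simp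
          have h10 : ((M : ℝ) * τ) ^ α ≤ δ ^ α :=
            Real.rpow_le_rpow (by positivity) hMτ h0.le
          rw [Real.mul_rpow (Nat.cast_nonneg M) hτ0.le] at h10
          rw [div_mul_eq_mul_div]
          exact (div_le_div_iff_of_pos_right h0).mpr h10
        calc τ * ∑ k ∈ (Finset.Icc 2 (m + 1)).filter (fun k : ℕ => (k : ℝ) * τ ≤ δ),
              ((k : ℝ) * τ) ^ (α - 1)
            ≤ τ * ∑ k ∈ Finset.Icc 2 M, ((k : ℝ) * τ) ^ (α - 1) := by
              apply mul_le_mul_of_nonneg_left h5 hτ0.le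
          _ = τ * ((∑ k ∈ Finset.Icc 2 M, (k : ℝ) ^ (α - 1)) * τ ^ (α - 1)) := by rw [h6]
          _ ≤ ((M : ℝ) ^ α / α) * τ ^ α := h8
          _ ≤ δ ^ α / α := h9
      -- recent part full bound
      have hSrec : ∑ j ∈ (Finset.Icc 1 m).filter p,
            (((m + 1 - j + 1 : ℕ) : ℝ) * τ) ^ (α - 1) * a j
          ≤ (∑ j ∈ (Finset.Icc 1 m).filter p,
            (((m + 1 - j + 1 : ℕ) : ℝ) * τ) ^ (α - 1)) * (4 * A * q ^ m) := by
        rw [Finset.sum_mul]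
        apply Finset.sum_le_sum
        intro j hj
        rw [Finset.mem_filter] at hj
        have haj : a j ≤ 4 * A * q ^ m := by
          have h1j := hIH j hj.1
          have hjm : j ≤ m := (Finset.mem_Icc.mp hj.1).2
          have : q ^ j ≤ q ^ m := pow_le_pow_right₀ hq1 hjm
          nlinarith
        exact mul_le_mul_of_nonneg_left haj (Real.rpow_nonneg (by positivity) _)
      -- assemble
      have hδhalf : 2 * B * (δ ^ α / α) ≤ 1 / 2 := by
        have hBp : (0:ℝ) < B + 1 := by linarith
        have heq : 2 * B * (α / (4 * (B + 1)) / α) = B / (2 * (B + 1)) := by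
          field_simp
          ring
        rw [hδα, heq, div_le_iff₀ (by positivity)]
        linarith
      have hq4Am : (0:ℝ) ≤ 4 * A * q ^ m := by positivity
      have hrec2 : τ * ∑ j ∈ (Finset.Icc 1 m).filter p,
            (((m + 1 - j + 1 : ℕ) : ℝ) * τ) ^ (α - 1) * a j
          ≤ (δ ^ α / α) * (4 * A * q ^ m) := by
        calc τ * ∑ j ∈ (Finset.Icc 1 m).filter p,
              (((m + 1 - j + 1 : ℕ) : ℝ) * τ) ^ (α - 1) * a j
            ≤ τ * ((∑ j ∈ (Finset.Icc 1 m).filter p,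
              (((m + 1 - j + 1 : ℕ) : ℝ) * τ) ^ (α - 1)) * (4 * A * q ^ m)) :=
              mul_le_mul_of_nonneg_left hSrec hτ0.le
          _ = (τ * ∑ j ∈ (Finset.Icc 1 m).filter p,
              (((m + 1 - j + 1 : ℕ) : ℝ) * τ) ^ (α - 1)) * (4 * A * q ^ m) := by ring
          _ ≤ (δ ^ α / α) * (4 * A * q ^ m) := mul_le_mul_of_nonneg_right hK hq4Am
      have hrecfin : 2 * B * (τ * ∑ j ∈ (Finset.Icc 1 m).filter p,
            (((m + 1 - j + 1 : ℕ) : ℝ) * τ) ^ (α - 1) * a j) ≤ 2 * A * q ^ m := by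
        calc 2 * B * (τ * ∑ j ∈ (Finset.Icc 1 m).filter p,
              (((m + 1 - j + 1 : ℕ) : ℝ) * τ) ^ (α - 1) * a j)
            ≤ 2 * B * ((δ ^ α / α) * (4 * A * q ^ m)) :=
              mul_le_mul_of_nonneg_left hrec2 (by positivity)
          _ = (2 * B * (δ ^ α / α)) * (4 * A * q ^ m) := by ring
          _ ≤ (1/2) * (4 * A * q ^ m) := mul_le_mul_of_nonneg_right hδhalf hq4Am
          _ = 2 * A * q ^ m := by ring
      have holdfin : 2 * B * (τ * ∑ j ∈ (Finset.Icc 1 m).filter (fun j => ¬ p j),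
            (((m + 1 - j + 1 : ℕ) : ℝ) * τ) ^ (α - 1) * a j) ≤ A * (q ^ (m + 1) - 1) := by
        calc 2 * B * (τ * ∑ j ∈ (Finset.Icc 1 m).filter (fun j => ¬ p j),
              (((m + 1 - j + 1 : ℕ) : ℝ) * τ) ^ (α - 1) * a j)
            ≤ 2 * B * (τ * (δ ^ (α - 1) * (4 * A * ∑ j ∈ Finset.Icc 1 m, q ^ j))) := by
              apply mul_le_mul_of_nonneg_left _ (by positivity : (0:ℝ) ≤ 2 * B)
              exact mul_le_mul_of_nonneg_left hSold hτ0.le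
          _ = A * (4 * c * τ * ∑ j ∈ Finset.Icc 1 m, q ^ j) := by rw [hcdef]; ring
          _ ≤ A * (q ^ (m + 1) - 1) := mul_le_mul_of_nonneg_left hgeom hA
      have hScomb : 2 * (B * (τ * S))
          = 2 * B * (τ * ∑ j ∈ (Finset.Icc 1 m).filter p,
              (((m + 1 - j + 1 : ℕ) : ℝ) * τ) ^ (α - 1) * a j)
          + 2 * B * (τ * ∑ j ∈ (Finset.Icc 1 m).filter (fun j => ¬ p j),
              (((m + 1 - j + 1 : ℕ) : ℝ) * τ) ^ (α - 1) * a j) := by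
        rw [hsplit]; ring
      have e1 : (1:ℝ) ≤ q ^ (m + 1) := by
        calc (1:ℝ) = q ^ 0 := (pow_zero q).symm
          _ ≤ q ^ (m + 1) := pow_le_pow_right₀ hq1 (by omega)
      have e2 : q ^ m ≤ q ^ (m + 1) := pow_le_pow_right₀ hq1 (by omega)
      have e3 := mul_le_mul_of_nonneg_left e1 hA
      have e4 := mul_le_mul_of_nonneg_left e2 hA
      nlinarith [hstep1, hScomb, hrecfin, holdfin, e3, e4]
  intro n h1 h2
  have hk := key n h1 h2
  have hqe : q ≤ Real.exp (4 * c * τ) := by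
    have := Real.add_one_le_exp (4 * c * τ)
    rw [hqdef]; linarith
  have hqn : q ^ n ≤ Real.exp (4 * c * T) := by
    calc q ^ n ≤ Real.exp (4 * c * τ) ^ n := pow_le_pow_left₀ hq0 hqe n
      _ = Real.exp ((n : ℝ) * (4 * c * τ)) := (Real.exp_nat_mul _ n).symm
      _ ≤ Real.exp ((N : ℝ) * (4 * c * τ)) := by
          apply Real.exp_le_exp.mpr
          apply mul_le_mul_of_nonneg_right _ (by positivity)
          exact_mod_cast h2
      _ = Real.exp (4 * c * T) := by rw [← hNτ]; ring_nf
  calc a n ≤ 4 * A * q ^ n := hk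
    _ ≤ 4 * A * Real.exp (4 * c * T) := by
        apply mul_le_mul_of_nonneg_left hqn (by positivity)
    _ = 4 * Real.exp (4 * c * T) * A := by ring
end

section
/- Continuous Grönwall inequality with weakly singular kernel: if φ : (0,T] → [0,∞) is continuous and satisfies φ(t) ≤ A t^{β} + B ∫₀ᵗ (t−s)^{α−1} φ(s) ds for all t ∈ (0,T], with α ∈ (0,1), β > −1, A, B ≥ 0, and ∫₀ᵗ (t−s)^{α−1} s^{β} ds finite, then φ(t) ≤ C A t^{β} on (0,T] with C depending only on α, β, B, T. -/
/-!
Weight the unknown by `w(t) = exp (r t) t^β`. Splitting at `s = t/2`, the kernel integral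
`∫₀ᵗ (t - s)^(α-1) w(s) ds` is at most `c(α, β) r^(-α) w(t)`: near `s = 0` the factor
`(t/2)^α exp (-r t/2)` is `O(r^(-α))`, and near `s = t` the integral is bounded by
`∫₀^∞ u^(α-1) exp (-r u) du = Γ(α) r^(-α)`. For `r` large enough the right-hand side of the
inequality is then a contraction of factor `1/2` in the weighted sup norm `sup φ/w`, which is
finite by assumption, so `sup φ/w ≤ 2A` and `φ(t) ≤ 2 exp (r T) A t^β`.
-/

open MeasureTheory Set Real

theorem Real.rpow_mul_exp_neg_mul_le {x p r : ℝ} (hx : 0 ≤ x) (hp0 : 0 ≤ p) (hp1 : p ≤ 1)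
    (hr : 0 < r) : x ^ p * exp (-(r * x)) ≤ 1 / r ^ p := by
  have hrx : 0 ≤ r * x := mul_nonneg hr.le hx
  have h := rpow_one_add_le_one_add_mul_self (s := r * x - 1) (by linarith) hp0 hp1
  rw [add_sub_cancel, mul_rpow hr.le hx] at h
  have hexp : r ^ p * x ^ p ≤ exp (r * x) := by nlinarith [add_one_le_exp (r * x)]
  rw [le_div_iff₀ (rpow_pos_of_pos hr p), exp_neg, ← div_eq_mul_inv, div_mul_eq_mul_div,
    div_le_one (exp_pos _), mul_comm]
  exact hexp

theorem Real.div_two_rpow {t : ℝ} (ht : 0 ≤ t) (p : ℝ) : (t / 2) ^ p = 2 ^ (-p) * t ^ p := by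
  rw [div_rpow ht zero_le_two, rpow_neg zero_le_two, div_eq_inv_mul]

theorem Real.rpow_le_rpow_add_rpow {a b s p : ℝ} (ha : 0 < a) (has : a ≤ s) (hsb : s ≤ b) :
    s ^ p ≤ a ^ p + b ^ p := by
  have hs : 0 < s := ha.trans_le has
  rcases le_total 0 p with hp | hp
  · linarith [rpow_le_rpow hs.le hsb hp, rpow_nonneg ha.le p]
  · linarith [rpow_le_rpow_of_nonpos ha has hp, rpow_nonneg (hs.le.trans hsb) p]

theorem Real.intervalIntegral_rpow_mul_exp_neg_mul_le {a r b : ℝ} (ha : 0 < a) (hr : 0 < r)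
    (hb : 0 ≤ b) : ∫ u in 0..b, u ^ (a - 1) * exp (-(r * u)) ≤ Gamma a / r ^ a := by
  have hint : IntegrableOn (fun u : ℝ => u ^ (a - 1) * exp (-(r * u))) (Ioi 0) := by
    simpa [rpow_one] using
      integrableOn_rpow_mul_exp_neg_mul_rpow (p := 1) (by linarith) one_pos hr
  rw [intervalIntegral.integral_of_le hb, div_eq_inv_mul, ← inv_rpow hr.le, ← one_div,
    ← integral_rpow_mul_exp_neg_mul_Ioi ha hr]
  refine setIntegral_mono_set hint ?_ Ioc_subset_Ioi_self.eventuallyLE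
  filter_upwards [self_mem_ae_restrict measurableSet_Ioi] with u hu
  exact mul_nonneg (rpow_nonneg (le_of_lt hu) _) (exp_pos _).le

theorem intervalIntegrable_sub_rpow {p : ℝ} (hp : -1 < p) (a t : ℝ) :
    IntervalIntegrable (fun s => (t - s) ^ p) volume a t := by
  simpa using
    (intervalIntegral.intervalIntegrable_rpow' (a := t - a) (b := 0) hp).comp_sub_left t

theorem one_sub_mul_le_of_forall_le_add_mul {ι : Type*} {s : Set ι} {f : ι → ℝ} {a q : ℝ}
    (hf : BddAbove (f '' s)) (hq : q < 1)
    (h : ∀ m, (∀ u ∈ s, f u ≤ m) → ∀ u ∈ s, f u ≤ a + q * m) :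
    ∀ u ∈ s, (1 - q) * f u ≤ a := by
  intro u hu
  have hub : ∀ v ∈ s, f v ≤ sSup (f '' s) := fun v hv => le_csSup hf (mem_image_of_mem f hv)
  have hsup : sSup (f '' s) ≤ a + q * sSup (f '' s) :=
    csSup_le ⟨_, mem_image_of_mem f hu⟩ (forall_mem_image.2 (h _ hub))
  nlinarith [hub u hu]

noncomputable def kernelConst (α β : ℝ) : ℝ := 2 ^ (-β) / (β + 1) + (2 ^ (-β) + 1) * Gamma α

theorem kernelConst_nonneg {α β : ℝ} (hα : 0 ≤ α) (hβ : -1 < β) : 0 ≤ kernelConst α β :=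
  add_nonneg (div_nonneg (by positivity) (by linarith))
    (mul_nonneg (by positivity) (Gamma_nonneg_of_nonneg hα))

section Kernel

variable {α β r t : ℝ}

theorem intervalIntegrable_kernel_mul_weight_near (hβ : -1 < β) (ht : 0 < t) :
    IntervalIntegrable (fun s => (t - s) ^ (α - 1) * (exp (r * s) * s ^ β)) volume 0 (t / 2) := by
  have hcont : ContinuousOn (fun s => (t - s) ^ (α - 1) * exp (r * s)) (uIcc 0 (t / 2)) := by
    rw [uIcc_of_le (by linarith)]
    exact ((continuous_sub_left t).continuousOn.rpow_const fun s hs =>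
      Or.inl (sub_ne_zero.2 (by linarith [hs.2]))).mul (by fun_prop)
  simpa only [mul_assoc] using
    (intervalIntegral.intervalIntegrable_rpow' hβ).continuousOn_mul hcont

theorem intervalIntegrable_kernel_mul_weight_far (hα : 0 < α) (ht : 0 < t) :
    IntervalIntegrable (fun s => (t - s) ^ (α - 1) * (exp (r * s) * s ^ β)) volume (t / 2) t := by
  have hcont : ContinuousOn (fun s => exp (r * s) * s ^ β) (uIcc (t / 2) t) := by
    rw [uIcc_of_le (by linarith)]
    exact (by fun_prop : Continuous fun s => exp (r * s)).continuousOn.mul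
      (continuousOn_id.rpow_const fun s hs => Or.inl ((half_pos ht).trans_le hs.1).ne')
  exact (intervalIntegrable_sub_rpow (by linarith) _ t).mul_continuousOn hcont

theorem integral_kernel_mul_weight_near_le (hα0 : 0 < α) (hα1 : α ≤ 1) (hβ : -1 < β)
    (hr : 0 < r) (ht : 0 < t) :
    ∫ s in 0..t / 2, (t - s) ^ (α - 1) * (exp (r * s) * s ^ β)
      ≤ 2 ^ (-β) / (β + 1) / r ^ α * (exp (r * t) * t ^ β) := by
  have ht2 : 0 < t / 2 := half_pos ht
  calc ∫ s in 0..t / 2, (t - s) ^ (α - 1) * (exp (r * s) * s ^ β)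
      ≤ ∫ s in 0..t / 2, (t / 2) ^ (α - 1) * exp (r * (t / 2)) * s ^ β := by
        refine intervalIntegral.integral_mono_on_of_le_Ioo ht2.le
          (intervalIntegrable_kernel_mul_weight_near hβ ht)
          ((intervalIntegral.intervalIntegrable_rpow' hβ).const_mul _) fun s hs => ?_
        rw [← mul_assoc]
        refine mul_le_mul_of_nonneg_right (mul_le_mul ?_ ?_ (exp_pos _).le ?_)
          (rpow_nonneg hs.1.le _)
        · exact rpow_le_rpow_of_nonpos ht2 (by linarith [hs.2]) (by linarith)
        · exact exp_le_exp.2 (by nlinarith [hs.2])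
        · exact rpow_nonneg ht2.le _
    _ = 2 ^ (-β) / (β + 1) * ((t / 2) ^ α * exp (-(r * (t / 2)))) * (exp (r * t) * t ^ β) := by
        rw [intervalIntegral.integral_const_mul, integral_rpow (Or.inl hβ),
          zero_rpow (by linarith), sub_zero]
        have hpow : (t / 2) ^ (α - 1) * (t / 2) ^ (β + 1) = (t / 2) ^ α * (2 ^ (-β) * t ^ β) := by
          rw [← div_two_rpow ht.le, ← rpow_add ht2, ← rpow_add ht2]
          ring_nf
        have hexp : exp (r * (t / 2)) = exp (-(r * (t / 2))) * exp (r * t) := by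
          rw [← exp_add]
          ring_nf
        rw [hexp]
        linear_combination (exp (-(r * (t / 2))) * exp (r * t) / (β + 1)) * hpow
    _ ≤ 2 ^ (-β) / (β + 1) / r ^ α * (exp (r * t) * t ^ β) := by
        rw [div_eq_mul_one_div _ (r ^ α)]
        refine mul_le_mul_of_nonneg_right (mul_le_mul_of_nonneg_left ?_ ?_) (by positivity)
        · exact rpow_mul_exp_neg_mul_le ht2.le hα0.le hα1 hr
        · exact div_nonneg (by positivity) (by linarith)

theorem integral_kernel_mul_weight_far_le (hα0 : 0 < α) (hr : 0 < r) (ht : 0 < t) :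
    ∫ s in t / 2..t, (t - s) ^ (α - 1) * (exp (r * s) * s ^ β)
      ≤ (2 ^ (-β) + 1) * Gamma α / r ^ α * (exp (r * t) * t ^ β) := by
  have ht2 : 0 < t / 2 := half_pos ht
  set C := exp (r * t) * ((2 ^ (-β) + 1) * t ^ β)
  have hdom : IntervalIntegrable (fun s => C * ((t - s) ^ (α - 1) * exp (-(r * (t - s)))))
      volume (t / 2) t :=
    ((intervalIntegrable_sub_rpow (by linarith) _ t).mul_continuousOn (by fun_prop)).const_mul C
  calc ∫ s in t / 2..t, (t - s) ^ (α - 1) * (exp (r * s) * s ^ β)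
      ≤ ∫ s in t / 2..t, C * ((t - s) ^ (α - 1) * exp (-(r * (t - s)))) := by
        refine intervalIntegral.integral_mono_on_of_le_Ioo (by linarith)
          (intervalIntegrable_kernel_mul_weight_far hα0 ht) hdom fun s hs => ?_
        have hexp : exp (r * s) = exp (r * t) * exp (-(r * (t - s))) := by
          rw [← exp_add]
          ring_nf
        have hpow : s ^ β ≤ (2 ^ (-β) + 1) * t ^ β := by
          have := rpow_le_rpow_add_rpow (p := β) ht2 hs.1.le hs.2.le
          rw [div_two_rpow ht.le] at this
          linarith
        have hker : 0 ≤ (t - s) ^ (α - 1) * exp (-(r * (t - s))) :=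
          mul_nonneg (rpow_nonneg (by linarith [hs.2]) _) (exp_pos _).le
        calc (t - s) ^ (α - 1) * (exp (r * s) * s ^ β)
            = exp (r * t) * s ^ β * ((t - s) ^ (α - 1) * exp (-(r * (t - s)))) := by
              rw [hexp]
              ring
          _ ≤ C * ((t - s) ^ (α - 1) * exp (-(r * (t - s)))) :=
              mul_le_mul_of_nonneg_right (mul_le_mul_of_nonneg_left hpow (exp_pos _).le) hker
    _ = C * ∫ u in 0..t / 2, u ^ (α - 1) * exp (-(r * u)) := by
        rw [intervalIntegral.integral_const_mul,
          intervalIntegral.integral_comp_sub_left (fun u => u ^ (α - 1) * exp (-(r * u))) t,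
          sub_self, show t - t / 2 = t / 2 by ring]
    _ ≤ C * (Gamma α / r ^ α) := by
        gcongr
        exact intervalIntegral_rpow_mul_exp_neg_mul_le hα0 hr ht2.le
    _ = (2 ^ (-β) + 1) * Gamma α / r ^ α * (exp (r * t) * t ^ β) := by
        ring

theorem integral_kernel_mul_weight_le (hα0 : 0 < α) (hα1 : α ≤ 1) (hβ : -1 < β) (hr : 0 < r)
    (ht : 0 < t) :
    ∫ s in 0..t, (t - s) ^ (α - 1) * (exp (r * s) * s ^ β)
      ≤ kernelConst α β / r ^ α * (exp (r * t) * t ^ β) := by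
  rw [← intervalIntegral.integral_add_adjacent_intervals
    (intervalIntegrable_kernel_mul_weight_near hβ ht)
    (intervalIntegrable_kernel_mul_weight_far hα0 ht), kernelConst, add_div, add_mul]
  exact add_le_add (integral_kernel_mul_weight_near_le hα0 hα1 hβ hr ht)
    (integral_kernel_mul_weight_far_le hα0 hr ht)

theorem le_mul_weight_of_le_add_integral {φ : ℝ → ℝ} {A B m : ℝ} (hα0 : 0 < α) (hα1 : α ≤ 1)
    (hβ : -1 < β) (hr : 0 < r) (ht : 0 < t) (hA : 0 ≤ A) (hB : 0 ≤ B) (hm : 0 ≤ m)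
    (hφm : ∀ s ∈ Ioo 0 t, φ s ≤ m * (exp (r * s) * s ^ β))
    (hint : IntegrableOn (fun s => (t - s) ^ (α - 1) * φ s) (Ioo 0 t))
    (hφ : φ t ≤ A * t ^ β + B * ∫ s in Ioo 0 t, (t - s) ^ (α - 1) * φ s) :
    φ t ≤ (A + B * (kernelConst α β / r ^ α) * m) * (exp (r * t) * t ^ β) := by
  have hkw := (intervalIntegrable_kernel_mul_weight_near (r := r) (α := α) hβ ht).trans
    (intervalIntegrable_kernel_mul_weight_far hα0 ht)
  have hI : ∫ s in Ioo 0 t, (t - s) ^ (α - 1) * φ s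
      ≤ m * (kernelConst α β / r ^ α * (exp (r * t) * t ^ β)) := by
    calc ∫ s in Ioo 0 t, (t - s) ^ (α - 1) * φ s
        ≤ ∫ s in Ioo 0 t, m * ((t - s) ^ (α - 1) * (exp (r * s) * s ^ β)) := by
          refine setIntegral_mono_on hint
            (((intervalIntegrable_iff_integrableOn_Ioo_of_le ht.le).1 hkw).const_mul m)
            measurableSet_Ioo fun s hs => ?_
          rw [mul_left_comm]
          exact mul_le_mul_of_nonneg_left (hφm s hs) (rpow_nonneg (by linarith [hs.2]) _)
      _ = m * ∫ s in 0..t, (t - s) ^ (α - 1) * (exp (r * s) * s ^ β) := by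
          rw [integral_const_mul, intervalIntegral.integral_of_le ht.le,
            integral_Ioc_eq_integral_Ioo]
      _ ≤ m * (kernelConst α β / r ^ α * (exp (r * t) * t ^ β)) :=
          mul_le_mul_of_nonneg_left (integral_kernel_mul_weight_le hα0 hα1 hβ hr ht) hm
  have hA' : A * t ^ β ≤ A * (exp (r * t) * t ^ β) :=
    mul_le_mul_of_nonneg_left
      (le_mul_of_one_le_left (rpow_nonneg ht.le β) (one_le_exp (by positivity))) hA
  calc φ t ≤ A * (exp (r * t) * t ^ β) + B * (m * (kernelConst α β / r ^ α
        * (exp (r * t) * t ^ β))) := hφ.trans (add_le_add hA' (mul_le_mul_of_nonneg_left hI hB))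
    _ = (A + B * (kernelConst α β / r ^ α) * m) * (exp (r * t) * t ^ β) := by ring

end Kernel

theorem bddAbove_div_exp_mul_rpow {φ : ℝ → ℝ} {r β T M : ℝ} (hr : 0 ≤ r)
    (hφ0 : ∀ t ∈ Ioc 0 T, 0 ≤ φ t) (hM : ∀ t ∈ Ioc 0 T, t ^ (-β) * φ t ≤ M) :
    BddAbove ((fun u => φ u / (exp (r * u) * u ^ β)) '' Ioc 0 T) := by
  refine ⟨M, forall_mem_image.2 fun u hu => ?_⟩
  have hu0 := hu.1
  calc φ u / (exp (r * u) * u ^ β) ≤ φ u / u ^ β :=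
        div_le_div_of_nonneg_left (hφ0 u hu) (by positivity)
          (le_mul_of_one_le_left (by positivity) (one_le_exp (by positivity)))
    _ = u ^ (-β) * φ u := by rw [rpow_neg hu0.le, inv_mul_eq_div]
    _ ≤ M := hM u hu

theorem div_exp_mul_rpow_le_of_le_add_integral {φ : ℝ → ℝ} {α β r A B T M : ℝ} (hα0 : 0 < α)
    (hα1 : α ≤ 1) (hβ : -1 < β) (hr : 0 < r) (hT : 0 < T) (hA : 0 ≤ A) (hB : 0 ≤ B)
    (hBr : B * (kernelConst α β / r ^ α) ≤ 1 / 2)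
    (hφ0 : ∀ t ∈ Ioc 0 T, 0 ≤ φ t) (hM : ∀ t ∈ Ioc 0 T, t ^ (-β) * φ t ≤ M)
    (hint : ∀ t ∈ Ioc 0 T, IntegrableOn (fun s => (t - s) ^ (α - 1) * φ s) (Ioo 0 t))
    (hφ : ∀ t ∈ Ioc 0 T, φ t ≤ A * t ^ β + B * ∫ s in Ioo 0 t, (t - s) ^ (α - 1) * φ s) :
    ∀ t ∈ Ioc 0 T, φ t / (exp (r * t) * t ^ β) ≤ 2 * A := by
  have hw : ∀ u ∈ Ioc 0 T, 0 < exp (r * u) * u ^ β := fun u hu =>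
    mul_pos (exp_pos _) (rpow_pos_of_pos hu.1 β)
  have hT' : T ∈ Ioc 0 T := ⟨hT, le_rfl⟩
  intro t ht
  suffices (1 - 1 / 2) * (φ t / (exp (r * t) * t ^ β)) ≤ A by linarith
  refine one_sub_mul_le_of_forall_le_add_mul (bddAbove_div_exp_mul_rpow hr.le hφ0 hM)
    (by norm_num) (fun m hm u hu => ?_) t ht
  have hm0 : 0 ≤ m := (div_nonneg (hφ0 T hT') (hw T hT').le).trans (hm T hT')
  have hφm : ∀ s ∈ Ioo 0 u, φ s ≤ m * (exp (r * s) * s ^ β) := fun s hs =>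
    (div_le_iff₀ (hw s ⟨hs.1, hs.2.le.trans hu.2⟩)).1 (hm s ⟨hs.1, hs.2.le.trans hu.2⟩)
  rw [div_le_iff₀ (hw u hu)]
  refine (le_mul_weight_of_le_add_integral hα0 hα1 hβ hr hu.1 hA hB hm0 hφm (hint u hu)
    (hφ u hu)).trans (mul_le_mul_of_nonneg_right ?_ (hw u hu).le)
  nlinarith

theorem stmt_8 (α β B T : ℝ) (hα : α ∈ Set.Ioo (0:ℝ) 1) (hβ : -1 < β) (hB : 0 ≤ B)
    (hT : 0 < T) :
    ∃ C > (0:ℝ), ∀ (A : ℝ), 0 ≤ A → ∀ (φ : ℝ → ℝ),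
      ContinuousOn φ (Set.Ioc 0 T) →
      (∀ t ∈ Set.Ioc (0:ℝ) T, 0 ≤ φ t) →
      (∃ M : ℝ, ∀ t ∈ Set.Ioc (0:ℝ) T, t ^ (-β) * φ t ≤ M) →
      (∀ t ∈ Set.Ioc (0:ℝ) T,
        MeasureTheory.IntegrableOn (fun s => (t - s) ^ (α - 1) * φ s) (Set.Ioo 0 t)) →
      (∀ t ∈ Set.Ioc (0:ℝ) T,
        φ t ≤ A * t ^ β + B * ∫ s in Set.Ioo (0:ℝ) t, (t - s) ^ (α - 1) * φ s) →
      ∀ t ∈ Set.Ioc (0:ℝ) T, φ t ≤ C * A * t ^ β := by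
  obtain ⟨hα0, hα1⟩ := hα
  set r := (2 * B * kernelConst α β + 1) ^ α⁻¹
  have hc := kernelConst_nonneg hα0.le hβ
  have hr : 0 < r := by positivity
  have hBr : B * (kernelConst α β / r ^ α) ≤ 1 / 2 := by
    rw [rpow_inv_rpow (by positivity) hα0.ne', mul_div_assoc', div_le_iff₀ (by positivity)]
    linarith
  refine ⟨2 * exp (r * T), by positivity, fun A hA φ _ hφ0 ⟨M, hM⟩ hint hφ t ht => ?_⟩
  have hψ := div_exp_mul_rpow_le_of_le_add_integral hα0 hα1.le hβ hr hT hA hB hBr hφ0 hM hint hφ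
    t ht
  have hw : 0 < exp (r * t) * t ^ β := mul_pos (exp_pos _) (rpow_pos_of_pos ht.1 β)
  calc φ t ≤ (exp (r * t) * t ^ β) * (2 * A) := by rwa [div_le_iff₀' hw] at hψ
    _ ≤ (exp (r * T) * t ^ β) * (2 * A) := by
        gcongr
        exacts [rpow_nonneg ht.1.le β, ht.2]
    _ = 2 * exp (r * T) * A * t ^ β := by ring
end
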